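/- arXiv:1506.04598 — 4 statements merged into one kernel-verified Lean document; each statement's English description precedes it below -/
import Mathlib

section
/- Let 𝔄 be an excellent based A-algebra. In the asymptotic ring 𝔄^∞ one has t_i t_{i'} = δ_{i,i'} t_i for all i, i' ∈ I₀. -/
open scoped Classical
open Finset

noncomputable section

/-- The ring `A = ℤ[v,v⁻¹]` of Laurent polynomials over `ℤ`. -/
abbrev LP : Type := LaurentPolynomial ℤ

/-- The coefficient of `v^n` in a Laurent polynomial. -/
def lcoeff (f : LP) (n : ℤ) : ℤ := (AddMonoidAlgebra.coeff f : ℤ →₀ ℤ) n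

/-- A based `A`-algebra (Lusztig, 1.9), encoded by its structure constants
`h i i' j` (the coefficient of `b j` in `b i * b i'`), the coordinates `e i` of the
unit element, the involution `einv` of the index set (written `i ↦ i^!`), and the
distinguished subset `I0` of `{i | i^! = i}`. -/
structure BasedAlgebra (I : Type) [Fintype I] [DecidableEq I] where
  h : I → I → I → LP
  e : I → LP
  einv : I → I
  I0 : Finset I
  einv_invol : ∀ i, einv (einv i) = i
  mul_assoc' : ∀ i j k l, ∑ m, h i j m * h m k l = ∑ m, h j k m * h i m l
  one_mul' : ∀ j k, ∑ i, e i * h i j k = if j = k then 1 else 0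
  mul_one' : ∀ j k, ∑ i, e i * h j i k = if j = k then 1 else 0
  anti' : ∀ i i' j, h (einv i) (einv i') (einv j) = h i' i j
  I0_fixed : ∀ i ∈ I0, einv i = i

namespace BasedAlgebra

variable {I : Type} [Fintype I] [DecidableEq I]

/-- The preorder `⪯_left` on `I`, generated by: `j ⪯_left i` if `h i' i j ≠ 0` for some `i'`. -/
def leLeft (B : BasedAlgebra I) : I → I → Prop :=
  Relation.ReflTransGen (fun j i => ∃ i', B.h i' i j ≠ 0)

/-- The preorder `⪯` on `I`, generated by:
`j ⪯ i` if `h i i' j ≠ 0` or `h i' i j ≠ 0` for some `i'`. -/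
def leTwo (B : BasedAlgebra I) : I → I → Prop :=
  Relation.ReflTransGen (fun j i => ∃ i', B.h i i' j ≠ 0 ∨ B.h i' i j ≠ 0)

/-- The equivalence relation `∼_left` whose classes are the left cells. -/
def simLeft (B : BasedAlgebra I) (i j : I) : Prop := B.leLeft i j ∧ B.leLeft j i

/-- The equivalence relation `∼` whose classes are the two-sided cells. -/
def simTwo (B : BasedAlgebra I) (i j : I) : Prop := B.leTwo i j ∧ B.leTwo j i

/-- `c` is a left cell. -/
def IsLeftCell (B : BasedAlgebra I) (c : Set I) : Prop := ∃ i, c = {j | B.simLeft j i}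

/-- `c` is a two-sided cell. -/
def IsTwoCell (B : BasedAlgebra I) (c : Set I) : Prop := ∃ i, c = {j | B.simTwo j i}

/-- Lusztig's `a`-function: `a j` is the smallest `m : ℕ` such that
`h i i' j ∈ v^{-m} ℤ[v]` for all `i, i'`. -/
def af (B : BasedAlgebra I) (j : I) : ℕ :=
  sInf {m : ℕ | ∀ i i' : I, ∀ n : ℤ, n < -(m : ℤ) → lcoeff (B.h i i' j) n = 0}

/-- The leading coefficients: `h i i' (j^!) = (hstar i i' j) v^{-a(j^!)} +` higher powers. -/
def hstar (B : BasedAlgebra I) (i i' j : I) : ℤ :=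
  lcoeff (B.h i i' (B.einv j)) (-(B.af (B.einv j) : ℤ))

/-- The based algebra is *excellent* if properties Q1–Q11 of Lusztig (1.9) hold. -/
structure Excellent (B : BasedAlgebra I) : Prop where
  q1 : ∀ j ∈ B.I0, ∀ i i', B.hstar i i' j ≠ 0 → i' = B.einv i
  q2 : ∀ i, ∃! j, j ∈ B.I0 ∧ B.hstar (B.einv i) i j ≠ 0
  q3 : ∀ i' i, B.leTwo i' i → B.af i ≤ B.af i'
  q4 : ∀ j ∈ B.I0, ∀ i, B.hstar (B.einv i) i j ≠ 0 → B.hstar (B.einv i) i j = 1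
  q5 : ∀ i j k, B.hstar i j k = B.hstar j k i
  q6 : ∀ i j k, B.hstar i j k ≠ 0 →
    B.simLeft i (B.einv j) ∧ B.simLeft j (B.einv k) ∧ B.simLeft k (B.einv i)
  q7 : ∀ i' i, B.leLeft i' i → B.af i' = B.af i → B.simLeft i' i
  q8 : ∀ i' i, B.leTwo i' i → B.af i' = B.af i → B.simTwo i' i
  q9a : ∀ i, ∃! j, j ∈ B.I0 ∧ B.simLeft j i
  q9b : ∀ i j, j ∈ B.I0 → B.simLeft j i → B.hstar (B.einv i) i j = 1
  q10 : ∀ i, B.simTwo i (B.einv i)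
  q11 : ∀ i i' j k, B.af j = B.af k → ∀ p q : ℤ,
    ∑ j', lcoeff (B.h k i' j') p * lcoeff (B.h i j' j) q
      = ∑ j', lcoeff (B.h i k j') q * lcoeff (B.h j' i' j) p

/-- The multiplication of the asymptotic ring `𝔄^∞`, on coordinates with respect to the
basis `{t_i}`: `t_i t_{i'} = ∑_j h*_{i,i',j^!} t_j`. -/
def tmul (B : BasedAlgebra I) (x y : I → ℤ) : I → ℤ :=
  fun j => ∑ i, ∑ i', x i * y i' * B.hstar i i' (B.einv j)

/-- The element `∑_{i ∈ I₀} t_i` of `𝔄^∞`. -/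
def tone (B : BasedAlgebra I) : I → ℤ := fun i => if i ∈ B.I0 then 1 else 0

/-- The basis element `t_i` of `𝔄^∞`. -/
def tbasis (B : BasedAlgebra I) (i : I) : I → ℤ := fun j => if j = i then 1 else 0

end BasedAlgebra

namespace BasedAlgebra

variable {I : Type} [Fintype I] [DecidableEq I] (B : BasedAlgebra I)

lemma einv_eq_iff_of_mem_I0 {i : I} (hi : i ∈ B.I0) (j : I) : B.einv j = i ↔ j = i := by
  constructor
  · intro h
    rw [← B.einv_invol j, h, B.I0_fixed i hi]
  · rintro rfl
    exact B.I0_fixed j hi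

lemma tmul_tbasis (i i' j : I) :
    B.tmul (B.tbasis i) (B.tbasis i') j = B.hstar i i' (B.einv j) := by
  simp [tmul, tbasis]

namespace Excellent

variable {B}

lemma hstar_self_of_mem_I0 (hB : B.Excellent) {i : I} (hi : i ∈ B.I0) :
    B.hstar i i i = 1 := by
  simpa only [B.I0_fixed i hi] using hB.q9b i i hi ⟨.refl, .refl⟩

/-- Rotating with Q5 puts `i'`, then `i`, in the third slot, where Q1 ties the other two. -/
lemma eq_of_hstar_ne_zero_of_mem_I0 (hB : B.Excellent) {i i' k : I} (hi : i ∈ B.I0)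
    (hi' : i' ∈ B.I0) (h : B.hstar i i' k ≠ 0) : k = i ∧ i' = i := by
  have hk : k = i := by
    have hcyc : B.hstar k i i' ≠ 0 := by rwa [hB.q5]
    exact (B.einv_eq_iff_of_mem_I0 hi k).1 (hB.q1 i' hi' k i hcyc).symm
  refine ⟨hk, ?_⟩
  subst hk
  have hcyc : B.hstar i' k k ≠ 0 := by rwa [← hB.q5]
  exact ((hB.q1 k hi i' k hcyc).trans (B.I0_fixed i' hi')).symm

lemma hstar_of_mem_I0 (hB : B.Excellent) {i i' : I} (hi : i ∈ B.I0) (hi' : i' ∈ B.I0)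
    (k : I) : B.hstar i i' k = if i = i' ∧ k = i then 1 else 0 := by
  split_ifs with hc
  · obtain ⟨rfl, rfl⟩ := hc
    exact hB.hstar_self_of_mem_I0 hi
  · by_contra h
    obtain ⟨hk, hi'i⟩ := hB.eq_of_hstar_ne_zero_of_mem_I0 hi hi' h
    exact hc ⟨hi'i.symm, hk⟩

end Excellent

end BasedAlgebra

/-- Lusztig 1.9. In the asymptotic ring `𝔄^∞` of an excellent based
`A`-algebra one has `t_i t_{i'} = δ_{i,i'} t_i` for `i, i' ∈ I₀`. -/
theorem statement1 {I : Type} [Fintype I] [DecidableEq I]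
    (B : BasedAlgebra I) (hB : B.Excellent) :
    ∀ i ∈ B.I0, ∀ i' ∈ B.I0,
      B.tmul (B.tbasis i) (B.tbasis i') = if i = i' then B.tbasis i else 0 := by
  intro i hi i' hi'
  funext j
  rw [B.tmul_tbasis, hB.hstar_of_mem_I0 hi hi']
  simp only [B.einv_eq_iff_of_mem_I0 hi]
  by_cases h : i = i' <;> simp [h, BasedAlgebra.tbasis]
end
end

section
/- Let 𝔄 be an excellent based A-algebra. For a two-sided cell 𝐜 of I set 𝔄^∞_𝐜 = Σ_{i∈𝐜} ℤ t_i ⊆ 𝔄^∞. Then for two-sided cells 𝐜, 𝐜' one has 𝔄^∞_𝐜 · 𝔄^∞_{𝐜'} = 0 if 𝐜 ≠ 𝐜' and 𝔄^∞_𝐜 · 𝔄^∞_𝐜 ⊆ 𝔄^∞_𝐜; each 𝔄^∞_𝐜 is an associative ring with unit element Σ_{i∈I₀∩𝐜} t_i, and 𝔄^∞ = ⊕_𝐜 𝔄^∞_𝐜 as a direct sum of rings. -/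
open scoped Classical
open Finset

noncomputable section

/-!
A nonzero structure constant `h*_{i,i',k}` puts `i`, `i'` and `k` into one two-sided cell: Q6 links
`i ∼_left i'^!` and `i' ∼_left k^!`, and Q10 identifies each element's cell with that of its image
under `!`. Hence `t_i t_{i'}` is supported on the cell of `i` and `i'`, which gives the vanishing
across cells and the closure within a cell. For the unit, Q1 and Q5 show that `t_d t_i` and
`t_i t_d` (`d ∈ I₀`) can only have a `t_i`-component, and by Q2 and Q4 exactly one `d ∈ I₀`
contributes to it, with coefficient `1`; that `d` lies in the cell of `i`.
-/

namespace BasedAlgebra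

variable {I : Type} [Fintype I] [DecidableEq I] {B : BasedAlgebra I}

lemma einv_injective : Function.Injective B.einv :=
  Function.LeftInverse.injective B.einv_invol

lemma leLeft.leTwo {i j : I} (h : B.leLeft i j) : B.leTwo i j :=
  Relation.ReflTransGen.mono (fun _ _ ⟨i', hi⟩ => ⟨i', Or.inr hi⟩) _ _ h

lemma simLeft.simTwo {i j : I} (h : B.simLeft i j) : B.simTwo i j :=
  ⟨h.1.leTwo, h.2.leTwo⟩

lemma simTwo_refl (i : I) : B.simTwo i i := ⟨.refl, .refl⟩

protected lemma simTwo.symm {i j : I} (h : B.simTwo i j) : B.simTwo j i := ⟨h.2, h.1⟩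

protected lemma simTwo.trans {i j k : I} (h : B.simTwo i j) (h' : B.simTwo j k) : B.simTwo i k :=
  ⟨h.1.trans h'.1, h'.2.trans h.2⟩

lemma IsTwoCell.mem_of_simTwo {c : Set I} (hc : B.IsTwoCell c) {j k : I} (hj : j ∈ c)
    (h : B.simTwo k j) : k ∈ c := by
  obtain ⟨a, rfl⟩ := hc
  exact h.trans hj

lemma IsTwoCell.eq_of_mem {c c' : Set I} (hc : B.IsTwoCell c) (hc' : B.IsTwoCell c') {j : I}
    (hj : j ∈ c) (hj' : j ∈ c') : c = c' := by
  obtain ⟨a, rfl⟩ := hc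
  obtain ⟨b, rfl⟩ := hc'
  ext k
  exact ⟨fun h => (h.trans hj.symm).trans hj', fun h => (h.trans hj'.symm).trans hj⟩

lemma tmul_apply (x y : I → ℤ) (j : I) :
    B.tmul x y j = ∑ i, ∑ i', x i * y i' * B.hstar i i' (B.einv j) := rfl

lemma exists_hstar_ne_zero_of_tmul_ne_zero {x y : I → ℤ} {j : I} (h : B.tmul x y j ≠ 0) :
    ∃ i i', x i ≠ 0 ∧ y i' ≠ 0 ∧ B.hstar i i' (B.einv j) ≠ 0 := by
  obtain ⟨i, -, hi⟩ := exists_ne_zero_of_sum_ne_zero h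
  obtain ⟨i', -, hi'⟩ := exists_ne_zero_of_sum_ne_zero hi
  simp only [ne_eq, mul_eq_zero, not_or] at hi'
  exact ⟨i, i', hi'.1.1, hi'.1.2, hi'.2⟩

/-- The `t_i`-coefficients of the unit of the ring `𝔄^∞_𝐜`. -/
def cellOne (B : BasedAlgebra I) (c : Set I) : I → ℤ := fun i => if i ∈ B.I0 ∧ i ∈ c then 1 else 0

namespace Excellent

variable (hB : B.Excellent)
include hB

lemma simTwo_of_hstar_ne_zero {i i' k : I} (h : B.hstar i i' k ≠ 0) :
    B.simTwo i k ∧ B.simTwo i' k := by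
  obtain ⟨hi, hi', -⟩ := hB.q6 i i' k h
  have hi'k : B.simTwo i' k := hi'.simTwo.trans (hB.q10 k).symm
  exact ⟨(hi.simTwo.trans (hB.q10 i').symm).trans hi'k, hi'k⟩

lemma exists_simTwo_of_tmul_ne_zero {x y : I → ℤ} {j : I} (h : B.tmul x y j ≠ 0) :
    ∃ i i', x i ≠ 0 ∧ y i' ≠ 0 ∧ B.simTwo i j ∧ B.simTwo i' j := by
  obtain ⟨i, i', hx, hy, hh⟩ := exists_hstar_ne_zero_of_tmul_ne_zero h
  obtain ⟨hi, hi'⟩ := hB.simTwo_of_hstar_ne_zero hh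
  have hj : B.simTwo (B.einv j) j := (hB.q10 j).symm
  exact ⟨i, i', hx, hy, hi.trans hj, hi'.trans hj⟩

lemma hstar_einv_eq_zero_of_mem_I0_left {i i' j : I} (hi : i ∈ B.I0) (hne : i' ≠ j) :
    B.hstar i i' (B.einv j) = 0 := by
  by_contra h
  rw [hB.q5] at h
  exact hne (einv_injective (hB.q1 i hi i' (B.einv j) h)).symm

lemma hstar_einv_eq_zero_of_mem_I0_right {i i' j : I} (hi' : i' ∈ B.I0) (hne : i ≠ j) :
    B.hstar i i' (B.einv j) = 0 := by
  by_contra h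
  rw [← hB.q5] at h
  exact hne (by simpa only [B.einv_invol] using hB.q1 i' hi' (B.einv j) i h)

lemma sum_cellOne_mul_hstar {c : Set I} (hc : B.IsTwoCell c) {k : I} (hk : k ∈ c) :
    ∑ i, B.cellOne c i * B.hstar (B.einv k) k i = 1 := by
  obtain ⟨d, ⟨hd, hdk⟩, huniq⟩ := hB.q2 k
  have hdc : d ∈ c := hc.mem_of_simTwo hk (hB.simTwo_of_hstar_ne_zero hdk).2.symm
  rw [sum_eq_single d]
  · simp [cellOne, hd, hdc, hB.q4 d hd k hdk]
  · intro i _ hid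
    by_cases hi : i ∈ B.I0 ∧ i ∈ c
    · have : B.hstar (B.einv k) k i = 0 := by_contra fun h => hid (huniq i ⟨hi.1, h⟩)
      simp [this]
    · simp [cellOne, hi]
  · simp

lemma tmul_cellOne_left {c : Set I} (hc : B.IsTwoCell c) {x : I → ℤ}
    (hx : Function.support x ⊆ c) : B.tmul (B.cellOne c) x = x := by
  funext j
  have hdiag : ∀ i, ∑ i', B.cellOne c i * x i' * B.hstar i i' (B.einv j)
      = x j * (B.cellOne c i * B.hstar (B.einv (B.einv j)) (B.einv j) i) := by
    intro i
    rw [sum_eq_single j, hB.q5, B.einv_invol]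
    · ring
    · intro i' _ hne
      by_cases hi : i ∈ B.I0
      · rw [hB.hstar_einv_eq_zero_of_mem_I0_left hi hne, mul_zero]
      · simp [cellOne, hi]
    · simp
  rw [tmul_apply, sum_congr rfl fun i _ => hdiag i, ← mul_sum]
  by_cases hxj : x j = 0
  · rw [hxj, zero_mul]
  · have hj : B.einv j ∈ c := hc.mem_of_simTwo (hx hxj) (hB.q10 j).symm
    rw [hB.sum_cellOne_mul_hstar hc hj, mul_one]

lemma tmul_cellOne_right {c : Set I} (hc : B.IsTwoCell c) {x : I → ℤ}
    (hx : Function.support x ⊆ c) : B.tmul x (B.cellOne c) = x := by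
  funext j
  have hdiag : ∀ i', ∑ i, x i * B.cellOne c i' * B.hstar i i' (B.einv j)
      = x j * (B.cellOne c i' * B.hstar (B.einv j) j i') := by
    intro i'
    rw [sum_eq_single j, ← hB.q5]
    · ring
    · intro i _ hne
      by_cases hi' : i' ∈ B.I0
      · rw [hB.hstar_einv_eq_zero_of_mem_I0_right hi' hne, mul_zero]
      · simp [cellOne, hi']
    · simp
  rw [tmul_apply, sum_comm, sum_congr rfl fun i' _ => hdiag i', ← mul_sum]
  by_cases hxj : x j = 0
  · rw [hxj, zero_mul]
  · rw [hB.sum_cellOne_mul_hstar hc (hx hxj), mul_one]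

end Excellent

end BasedAlgebra

/-- Lusztig 1.9. For an excellent based `A`-algebra and two-sided cells
`𝐜, 𝐜'`: the subgroups `𝔄^∞_𝐜 = ∑_{i ∈ 𝐜} ℤ t_i` satisfy `𝔄^∞_𝐜 𝔄^∞_{𝐜'} = 0` for
`𝐜 ≠ 𝐜'` and `𝔄^∞_𝐜 𝔄^∞_𝐜 ⊆ 𝔄^∞_𝐜`; each `𝔄^∞_𝐜` is a ring with unit
`∑_{i ∈ I₀ ∩ 𝐜} t_i`; and `𝔄^∞ = ⊕_𝐜 𝔄^∞_𝐜` (the two-sided cells partition `I`). -/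
theorem statement5 {I : Type} [Fintype I] [DecidableEq I]
    (B : BasedAlgebra I) (hB : B.Excellent) :
    (∀ c c' : Set I, B.IsTwoCell c → B.IsTwoCell c' → c ≠ c' →
      ∀ x y : I → ℤ, (∀ i, x i ≠ 0 → i ∈ c) → (∀ i, y i ≠ 0 → i ∈ c') →
        B.tmul x y = 0) ∧
    (∀ c : Set I, B.IsTwoCell c →
      ∀ x y : I → ℤ, (∀ i, x i ≠ 0 → i ∈ c) → (∀ i, y i ≠ 0 → i ∈ c) →
        ∀ i, B.tmul x y i ≠ 0 → i ∈ c) ∧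
    (∀ c : Set I, B.IsTwoCell c →
      ∀ x : I → ℤ, (∀ i, x i ≠ 0 → i ∈ c) →
        B.tmul (fun i => if i ∈ B.I0 ∧ i ∈ c then 1 else 0) x = x ∧
        B.tmul x (fun i => if i ∈ B.I0 ∧ i ∈ c then 1 else 0) = x) ∧
    (∀ i : I, ∃ c : Set I, B.IsTwoCell c ∧ i ∈ c) ∧
    (∀ c c' : Set I, B.IsTwoCell c → B.IsTwoCell c' → c ≠ c' → Disjoint c c') := by
  refine ⟨fun c c' hc hc' hne x y hx hy => ?_, fun c hc x y hx _ j hj => ?_,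
    fun c hc x hx => ⟨hB.tmul_cellOne_left hc hx, hB.tmul_cellOne_right hc hx⟩,
    fun i => ⟨_, ⟨i, rfl⟩, B.simTwo_refl i⟩,
    fun c c' hc hc' hne => Set.disjoint_left.mpr fun j hj hj' => hne (hc.eq_of_mem hc' hj hj')⟩
  · funext j
    by_contra hj
    obtain ⟨i, i', hxi, hyi', hij, hi'j⟩ := hB.exists_simTwo_of_tmul_ne_zero hj
    exact hne (hc.eq_of_mem hc' (hc.mem_of_simTwo (hx i hxi) hij.symm)
      (hc'.mem_of_simTwo (hy i' hyi') hi'j.symm))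
  · obtain ⟨i, -, hxi, -, hij, -⟩ := hB.exists_simTwo_of_tmul_ne_zero hj
    exact hc.mem_of_simTwo (hx i hxi) hij.symm
end
end

section
/- Let 𝔄₀ be an excellent based A-algebra with basis {c_w : w ∈ I'}, involution w ↦ w^! and distinguished subset I₀', and let Ω be a finite group acting on the index set I' such that for every x ∈ Ω: h_{x(w),x(w'),x(w'')} = h_{w,w',w''} for all w,w',w'' (so that c_w ↦ c_{x(w)} extends to an A-algebra automorphism of 𝔄₀), x(w^!) = (x(w))^! for all w, and x(I₀') = I₀'. Let 𝔄₀⋊Ω be the free A-module with basis {c_w ⊗ x : w ∈ I', x ∈ Ω}, made into an A-algebra by (c_w ⊗ x)(c_{w'} ⊗ x') = (c_w · c_{x(w')}) ⊗ (xx') (the product c_w · c_{x(w')} computed in 𝔄₀), regarded as a based A-algebra with index set I'×Ω, involution (w,x)^! = (x⁻¹(w^!), x⁻¹), and distinguished subset {(d,1) : d ∈ I₀'}. Then 𝔄₀⋊Ω is an excellent based A-algebra. -/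
/-!
Every datum entering Q1–Q11 is Ω-equivariant in `𝔄₀` (the unit, the `a`-function, the leading
coefficients `h*`, the preorders), and in `𝔄₀⋊Ω` it is read off from `𝔄₀`:
`a(w,x) = a(w)`; `h*_{(w,x),(w',x'),(j,z)}` is `h*_{w, x(w'), xx'(j)}` if `xx'z = 1` and `0`
otherwise; `(j,z) ⪯_left (i,x)` iff `z⁻¹(j) ⪯_left x⁻¹(i)`; and `(j,z) ⪯ (i,x)` iff `y(j) ⪯ i`
for some `y ∈ Ω`. Through this dictionary each property Qn of `𝔄₀⋊Ω` is Qn of `𝔄₀` at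
translated indices.
-/

open scoped Classical
open Finset

noncomputable section

open Relation

theorem Relation.reflTransGen_comap_iff {α β : Type*} {r : β → β → Prop} (hr : ∀ b, r b b)
    {f : α → β} (hf : Function.Surjective f) {a b : α} :
    ReflTransGen (fun a b => r (f a) (f b)) a b ↔ ReflTransGen r (f a) (f b) := by
  refine ⟨fun hab => ReflTransGen.lift f (fun _ _ => id) _ _ hab, fun hab => ?_⟩
  suffices ∀ c, ReflTransGen r (f a) c → ∀ b, f b = c →
      ReflTransGen (fun a b => r (f a) (f b)) a b from this _ hab b rfl
  intro c hc
  induction hc with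
  | refl => exact fun b hb => .single (hb ▸ hr _)
  | tail _ hcd ih =>
    intro b hb
    obtain ⟨c', hc'⟩ := hf _
    exact (ih c' hc').tail (hb ▸ hc' ▸ hcd)

theorem Fintype.sum_prod_ite_snd_eq {α β M : Type*} [Fintype α] [Fintype β] [DecidableEq β]
    [AddCommMonoid M] (b : β) (f : α × β → M) :
    ∑ p : α × β, (if p.2 = b then f p else 0) = ∑ a, f (a, b) := by
  rw [Fintype.sum_prod_type]
  simp

theorem lcoeff_zero (n : ℤ) : lcoeff 0 n = 0 := rfl

namespace BasedAlgebra

variable {I : Type} [Fintype I] [DecidableEq I] (B : BasedAlgebra I)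

theorem exists_h_ne_zero_left (j : I) : ∃ i, B.h i j j ≠ 0 := by
  by_contra! hc
  simpa [hc] using B.one_mul' j j

theorem exists_h_ne_zero_right (j : I) : ∃ i, B.h j i j ≠ 0 := by
  by_contra! hc
  simpa [hc] using B.mul_one' j j

theorem leLeft_le_leTwo : B.leLeft ≤ B.leTwo :=
  ReflTransGen.mono fun _ _ ⟨i', hi'⟩ => ⟨i', Or.inr hi'⟩

theorem eq_e_of_one_mul {e' : I → LP}
    (he' : ∀ j k, ∑ i, e' i * B.h i j k = if j = k then 1 else 0) : e' = B.e := by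
  funext l
  calc e' l = ∑ j, e' j * ∑ i, B.e i * B.h j i l := by simp [B.mul_one']
    _ = ∑ i, B.e i * ∑ j, e' j * B.h j i l := by
      simp only [mul_sum]
      rw [sum_comm]
      exact sum_congr rfl fun _ _ => sum_congr rfl fun _ _ => by ring
    _ = B.e l := by simp [he']

structure IsCompatibleAction (Ω : Type) [Group Ω] [MulAction Ω I] : Prop where
  h_smul : ∀ (x : Ω) (w w' w'' : I), B.h (x • w) (x • w') (x • w'') = B.h w w' w''
  smul_einv : ∀ (x : Ω) (w : I), x • B.einv w = B.einv (x • w)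

namespace IsCompatibleAction

variable {B} {Ω : Type} [Group Ω] [MulAction Ω I]

theorem e_smul (hΩ : B.IsCompatibleAction Ω) (x : Ω) (w : I) : B.e (x • w) = B.e w := by
  refine congrFun (B.eq_e_of_one_mul (e' := fun i => B.e (x • i)) fun j k => ?_) w
  calc ∑ i, B.e (x • i) * B.h i j k
        = ∑ i, B.e (x • i) * B.h (x • i) (x • j) (x • k) := by simp only [hΩ.h_smul]
    _ = if x • j = x • k then 1 else 0 :=
        (Equiv.sum_comp (MulAction.toPerm x) fun i => B.e i * B.h i (x • j) (x • k)).trans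
          (B.one_mul' _ _)
    _ = if j = k then 1 else 0 := by simp

theorem af_smul (hΩ : B.IsCompatibleAction Ω) (x : Ω) (j : I) : B.af (x • j) = B.af j := by
  unfold af
  congr 1
  ext m
  refine ⟨fun hm i i' n hn => ?_, fun hm i i' n hn => ?_⟩
  · simpa only [hΩ.h_smul] using hm (x • i) (x • i') n hn
  · rw [← hΩ.h_smul x⁻¹, inv_smul_smul]
    exact hm _ _ n hn

theorem hstar_smul (hΩ : B.IsCompatibleAction Ω) (x : Ω) (i i' j : I) :
    B.hstar (x • i) (x • i') (x • j) = B.hstar i i' j := by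
  unfold hstar
  rw [← hΩ.smul_einv, hΩ.h_smul, hΩ.af_smul]

theorem leTwo_smul (hΩ : B.IsCompatibleAction Ω) (x : Ω) {a b : I} (hab : B.leTwo a b) :
    B.leTwo (x • a) (x • b) :=
  ReflTransGen.lift (x • ·)
    (fun _ _ ⟨i', hi'⟩ => ⟨x • i', by simpa only [hΩ.h_smul] using hi'⟩) _ _ hab

theorem leLeft_smul (hΩ : B.IsCompatibleAction Ω) (x : Ω) {a b : I} (hab : B.leLeft a b) :
    B.leLeft (x • a) (x • b) :=
  ReflTransGen.lift (x • ·)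
    (fun _ _ ⟨i', hi'⟩ => ⟨x • i', by simpa only [hΩ.h_smul] using hi'⟩) _ _ hab

theorem simLeft_smul_iff (hΩ : B.IsCompatibleAction Ω) (x : Ω) {a b : I} :
    B.simLeft (x • a) (x • b) ↔ B.simLeft a b := by
  have key : ∀ (y : Ω) {a b : I}, B.simLeft a b → B.simLeft (y • a) (y • b) :=
    fun y _ _ h => ⟨hΩ.leLeft_smul y h.1, hΩ.leLeft_smul y h.2⟩
  exact ⟨fun h => by simpa only [inv_smul_smul] using key x⁻¹ h, key x⟩

end IsCompatibleAction

section CrossedProduct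

variable {B} {Ω : Type} [Fintype Ω] [DecidableEq Ω] [Group Ω] [MulAction Ω I]

variable (B Ω) in
def crossH (p q r : I × Ω) : LP := if r.2 = p.2 * q.2 then B.h p.1 (p.2 • q.1) r.1 else 0

theorem sum_crossH {M : Type*} [AddCommMonoid M] (Φ : LP → I × Ω → M)
    (hΦ : ∀ r, Φ 0 r = 0) (p q : I × Ω) :
    ∑ r, Φ (B.crossH Ω p q r) r = ∑ m, Φ (B.h p.1 (p.2 • q.1) m) (m, p.2 * q.2) := by
  have hite : ∀ r, Φ (B.crossH Ω p q r) r
      = if r.2 = p.2 * q.2 then Φ (B.h p.1 (p.2 • q.1) r.1) r else 0 := fun r => by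
    unfold crossH; split_ifs <;> simp [hΦ]
  simp only [hite]
  exact Fintype.sum_prod_ite_snd_eq _ fun r => Φ (B.h p.1 (p.2 • q.1) r.1) r

theorem sum_crossH_crossH_left {M : Type*} [AddCommMonoid M] (Φ : LP → LP → M)
    (hΦ : ∀ X, Φ X 0 = 0) (hΦ' : ∀ Y, Φ 0 Y = 0) (a b c d : I × Ω) :
    ∑ r, Φ (B.crossH Ω a b r) (B.crossH Ω r c d)
      = if d.2 = a.2 * b.2 * c.2 then
          ∑ m, Φ (B.h a.1 (a.2 • b.1) m) (B.h m ((a.2 * b.2) • c.1) d.1) else 0 := by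
  rw [sum_crossH (fun X r => Φ X (B.crossH Ω r c d)) (fun r => hΦ' _)]
  split_ifs with hd <;> simp [crossH, hd, hΦ]

theorem sum_crossH_crossH_right {M : Type*} [AddCommMonoid M] (hΩ : B.IsCompatibleAction Ω)
    (Φ : LP → LP → M) (hΦ : ∀ X, Φ X 0 = 0) (hΦ' : ∀ Y, Φ 0 Y = 0)
    (a b c d : I × Ω) :
    ∑ r, Φ (B.crossH Ω b c r) (B.crossH Ω a r d)
      = if d.2 = a.2 * b.2 * c.2 then
          ∑ m, Φ (B.h (a.2 • b.1) ((a.2 * b.2) • c.1) m) (B.h a.1 m d.1) else 0 := by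
  rw [sum_crossH (fun X r => Φ X (B.crossH Ω a r d)) (fun r => hΦ' _)]
  split_ifs with hd
  · rw [← Equiv.sum_comp (MulAction.toPerm a.2)
      fun m => Φ (B.h (a.2 • b.1) ((a.2 * b.2) • c.1) m) (B.h a.1 m d.1)]
    simp [crossH, hd, mul_assoc, mul_smul, hΩ.h_smul]
  · simp [crossH, ← mul_assoc, hd, hΦ]

variable (B) in
def crossedProduct (hΩ : B.IsCompatibleAction Ω) : BasedAlgebra (I × Ω) where
  h := B.crossH Ω
  e p := if p.2 = 1 then B.e p.1 else 0
  einv p := (p.2⁻¹ • B.einv p.1, p.2⁻¹)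
  I0 := B.I0 ×ˢ {1}
  einv_invol := fun ⟨w, x⟩ => by
    simp [hΩ.smul_einv, ← mul_smul, B.einv_invol]
  mul_assoc' a b c d := by
    rw [sum_crossH_crossH_left _ mul_zero zero_mul,
      sum_crossH_crossH_right hΩ _ mul_zero zero_mul, B.mul_assoc']
  one_mul' j k := by
    simp only [ite_mul, zero_mul, Fintype.sum_prod_ite_snd_eq]
    by_cases hjk : j.2 = k.2
    · simp [crossH, hjk, B.one_mul', Prod.ext_iff]
    · simp [crossH, Ne.symm hjk, Prod.ext_iff, hjk]
  mul_one' j k := by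
    simp only [ite_mul, zero_mul, Fintype.sum_prod_ite_snd_eq]
    by_cases hjk : j.2 = k.2
    · simp only [crossH, hjk, mul_one, if_true, Prod.ext_iff, and_true]
      rw [← B.mul_one', ← Equiv.sum_comp (MulAction.toPerm k.2) fun i => B.e i * B.h j.1 i k.1]
      simp [hΩ.e_smul]
    · simp [crossH, Ne.symm hjk, Prod.ext_iff, hjk]
  anti' := fun ⟨w, x⟩ ⟨w', x'⟩ ⟨j, z⟩ => by
    simp only [crossH]
    by_cases hz : z = x' * x
    · subst hz
      rw [if_pos (mul_inv_rev x' x), if_pos rfl, ← hΩ.h_smul (x' * x)]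
      simp [smul_smul, mul_assoc, hΩ.smul_einv, B.anti']
    · rw [if_neg (by simpa [← mul_inv_rev, inv_inj] using hz), if_neg hz]
  I0_fixed := by
    rintro ⟨d, y⟩ hd
    obtain ⟨hd', rfl⟩ : d ∈ B.I0 ∧ y = 1 := by simpa [eq_comm] using hd
    simp [B.I0_fixed d hd']

section

variable {hΩ : B.IsCompatibleAction Ω}

theorem crossedProduct_h : (B.crossedProduct hΩ).h = B.crossH Ω := rfl

theorem crossedProduct_einv (w : I) (x : Ω) :
    (B.crossedProduct hΩ).einv (w, x) = (x⁻¹ • B.einv w, x⁻¹) := rfl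

theorem mem_I0_crossedProduct (p : I × Ω) :
    p ∈ (B.crossedProduct hΩ).I0 ↔ p.1 ∈ B.I0 ∧ p.2 = 1 :=
  Finset.mem_product.trans (and_congr Iff.rfl Finset.mem_singleton)

theorem existsUnique_mem_I0_crossedProduct (P : I × Ω → Prop) :
    (∃! p, p ∈ (B.crossedProduct hΩ).I0 ∧ P p) ↔ ∃! j, j ∈ B.I0 ∧ P (j, 1) := by
  constructor
  · rintro ⟨⟨j, z⟩, ⟨hj, hP⟩, huniq⟩
    obtain ⟨hj, rfl⟩ := (mem_I0_crossedProduct _).1 hj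
    exact ⟨j, ⟨hj, hP⟩, fun j' hj' => congrArg Prod.fst
      (huniq (j', 1) ⟨(mem_I0_crossedProduct _).2 ⟨hj'.1, rfl⟩, hj'.2⟩)⟩
  · rintro ⟨j, ⟨hj, hP⟩, huniq⟩
    refine ⟨(j, 1), ⟨(mem_I0_crossedProduct _).2 ⟨hj, rfl⟩, hP⟩, ?_⟩
    rintro ⟨j', z⟩ ⟨hj', hP'⟩
    obtain ⟨hj', rfl⟩ := (mem_I0_crossedProduct _).1 hj'
    rw [huniq j' ⟨hj', hP'⟩]

theorem af_crossedProduct (j : I) (z : Ω) : (B.crossedProduct hΩ).af (j, z) = B.af j := by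
  unfold af
  congr 1
  ext m
  refine ⟨fun hm i i' n hn => ?_, fun hm p q n hn => ?_⟩
  · simpa [crossedProduct_h, crossH] using hm (i, 1) (i', z) n hn
  · simp only [crossedProduct_h, crossH]
    split_ifs
    exacts [hm _ _ n hn, lcoeff_zero n]

theorem hstar_crossedProduct (w w' j : I) (x x' z : Ω) :
    (B.crossedProduct hΩ).hstar (w, x) (w', x') (j, z)
      = if x * x' * z = 1 then B.hstar w (x • w') ((x * x') • j) else 0 := by
  have hz : z⁻¹ = x * x' ↔ x * x' * z = 1 := by
    rw [inv_eq_iff_eq_inv, eq_inv_iff_mul_eq_one, mul_eq_one_comm]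
  unfold hstar
  rw [crossedProduct_einv, af_crossedProduct, crossedProduct_h, crossH, ← hΩ.smul_einv,
    hΩ.af_smul]
  dsimp only
  split_ifs with h₁ h₂ h₂
  · rw [h₁, hΩ.smul_einv, ← hΩ.smul_einv, hΩ.af_smul]
  · exact absurd (hz.1 h₁) h₂
  · exact absurd (hz.2 h₂) h₁
  · exact lcoeff_zero _

theorem hstar_einv_crossedProduct (w j : I) (x z : Ω) :
    (B.crossedProduct hΩ).hstar ((B.crossedProduct hΩ).einv (w, x)) (w, x) (j, z)
      = if z = 1 then B.hstar (B.einv (x⁻¹ • w)) (x⁻¹ • w) j else 0 := by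
  simp [crossedProduct_einv, hstar_crossedProduct, hΩ.smul_einv]

theorem exists_crossedProduct_h_ne_zero_left_iff (q r : I × Ω) :
    (∃ p, (B.crossedProduct hΩ).h p q r ≠ 0) ↔
      ∃ a, B.h a (q.2⁻¹ • q.1) (r.2⁻¹ • r.1) ≠ 0 := by
  obtain ⟨i, x⟩ := q
  obtain ⟨j, z⟩ := r
  constructor
  · rintro ⟨⟨a, u⟩, hp⟩
    simp only [crossedProduct_h, crossH] at hp
    split_ifs at hp with hz
    · refine ⟨z⁻¹ • a, ?_⟩
      rwa [← hΩ.h_smul z, smul_inv_smul, smul_inv_smul, smul_smul, hz, mul_inv_cancel_right]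
    · exact absurd rfl hp
  · rintro ⟨a, ha⟩
    refine ⟨(z • a, z * x⁻¹), ?_⟩
    simp only [crossedProduct_h, crossH, if_pos (inv_mul_cancel_right z x).symm, mul_smul]
    rwa [← hΩ.h_smul z⁻¹, inv_smul_smul, inv_smul_smul]

theorem exists_crossedProduct_h_ne_zero_right_iff (q r : I × Ω) :
    (∃ p, (B.crossedProduct hΩ).h q p r ≠ 0) ↔ ∃ b, B.h q.1 b r.1 ≠ 0 := by
  obtain ⟨i, x⟩ := q
  obtain ⟨j, z⟩ := r
  constructor
  · rintro ⟨⟨b, u⟩, hp⟩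
    simp only [crossedProduct_h, crossH] at hp
    split_ifs at hp
    exacts [⟨x • b, hp⟩, absurd rfl hp]
  · rintro ⟨b, hb⟩
    refine ⟨(x⁻¹ • b, x⁻¹ * z), ?_⟩
    rwa [crossedProduct_h, crossH, if_pos (mul_inv_cancel_left x z).symm, smul_inv_smul]

theorem leLeft_crossedProduct_iff (j i : I) (z x : Ω) :
    (B.crossedProduct hΩ).leLeft (j, z) (i, x) ↔ B.leLeft (z⁻¹ • j) (x⁻¹ • i) := by
  have hstep : (fun r q => ∃ p, (B.crossedProduct hΩ).h p q r ≠ 0)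
      = fun r q => (fun j i => ∃ a, B.h a i j ≠ 0) (r.2⁻¹ • r.1) (q.2⁻¹ • q.1) :=
    funext₂ fun r q => propext (exists_crossedProduct_h_ne_zero_left_iff q r)
  unfold leLeft
  rw [hstep]
  exact reflTransGen_comap_iff (r := fun j i => ∃ a, B.h a i j ≠ 0) B.exists_h_ne_zero_left
    fun j => ⟨(j, 1), by simp⟩

theorem simLeft_crossedProduct_iff (j i : I) (z x : Ω) :
    (B.crossedProduct hΩ).simLeft (j, z) (i, x) ↔ B.simLeft (z⁻¹ • j) (x⁻¹ • i) :=
  and_congr (leLeft_crossedProduct_iff _ _ _ _) (leLeft_crossedProduct_iff _ _ _ _)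

theorem leTwo_crossedProduct_of_fst_eq (j : I) (z u : Ω) :
    (B.crossedProduct hΩ).leTwo (j, z) (j, u) :=
  have ⟨p, hp⟩ := (exists_crossedProduct_h_ne_zero_right_iff (j, u) (j, z)).2
    (B.exists_h_ne_zero_right j)
  .single ⟨p, Or.inl hp⟩

theorem leTwo_crossedProduct_iff (j i : I) (z x : Ω) :
    (B.crossedProduct hΩ).leTwo (j, z) (i, x) ↔ ∃ y : Ω, B.leTwo (y • j) i := by
  constructor
  · suffices ∀ q, (B.crossedProduct hΩ).leTwo (j, z) q →
        ∃ y : Ω, B.leTwo (y • j) q.1 from this (i, x)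
    intro q h
    induction h with
    | refl => exact ⟨1, by rw [one_smul]; exact .refl⟩
    | @tail b c _ hbc ih =>
      obtain ⟨y, hy⟩ := ih
      obtain ⟨p, hp | hp⟩ := hbc
      · obtain ⟨a, ha⟩ := (exists_crossedProduct_h_ne_zero_right_iff c b).1 ⟨p, hp⟩
        exact ⟨y, hy.tail ⟨a, Or.inl ha⟩⟩
      · obtain ⟨a, ha⟩ := (exists_crossedProduct_h_ne_zero_left_iff c b).1 ⟨p, hp⟩
        have hbc : B.leTwo ((c.2 * b.2⁻¹) • b.1) c.1 := by
          simpa [mul_smul] using hΩ.leTwo_smul c.2 (.single ⟨a, Or.inr ha⟩)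
        exact ⟨c.2 * b.2⁻¹ * y, by rw [mul_smul]; exact (hΩ.leTwo_smul _ hy).trans hbc⟩
  · rintro ⟨y, hy⟩
    have hmove : (B.crossedProduct hΩ).leTwo (j, y⁻¹) (y • j, 1) :=
      leLeft_le_leTwo _ _ _ <| (leLeft_crossedProduct_iff _ _ _ _).2 <| by
        rw [inv_inv, inv_one, one_smul]; exact .refl
    have hlift : (B.crossedProduct hΩ).leTwo (y • j, 1) (i, 1) :=
      ReflTransGen.lift (fun a => (a, (1 : Ω)))
        (fun _ _ ⟨i', hi'⟩ => ⟨(i', 1), by simpa [crossedProduct_h, crossH] using hi'⟩)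
        _ _ hy
    exact (leTwo_crossedProduct_of_fst_eq j z y⁻¹).trans <| hmove.trans <|
      hlift.trans (leTwo_crossedProduct_of_fst_eq i 1 x)

theorem Excellent.crossedProduct_q1 (hB : B.Excellent) :
    ∀ j ∈ (B.crossedProduct hΩ).I0, ∀ i i', (B.crossedProduct hΩ).hstar i i' j ≠ 0 →
      i' = (B.crossedProduct hΩ).einv i := by
  rintro ⟨j, z⟩ hj ⟨w, x⟩ ⟨w', x'⟩ hne
  obtain ⟨hj, rfl⟩ := (mem_I0_crossedProduct _).1 hj
  rw [hstar_crossedProduct] at hne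
  split_ifs at hne with hxx'
  · rw [mul_one] at hxx'
    rw [hxx', one_smul] at hne
    rw [crossedProduct_einv, ← hB.q1 j hj w _ hne, inv_smul_smul,
      eq_inv_of_mul_eq_one_right hxx']
  · exact absurd rfl hne

theorem Excellent.crossedProduct_q5 (hB : B.Excellent) :
    ∀ i j k, (B.crossedProduct hΩ).hstar i j k = (B.crossedProduct hΩ).hstar j k i := by
  rintro ⟨w, x⟩ ⟨w', x'⟩ ⟨j, z⟩
  have hcyc : x * x' * z = 1 ↔ x' * z * x = 1 := by rw [mul_assoc, mul_eq_one_comm]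
  rw [hstar_crossedProduct, hstar_crossedProduct]
  split_ifs with h₁ h₂ h₂
  · rw [hB.q5, ← hΩ.hstar_smul x⁻¹, inv_smul_smul, ← mul_smul, inv_mul_cancel_left,
      eq_inv_of_mul_eq_one_left h₂]
  · exact absurd (hcyc.1 h₁) h₂
  · exact absurd (hcyc.2 h₂) h₁
  · rfl

theorem Excellent.crossedProduct_q6 (hB : B.Excellent) :
    ∀ i j k, (B.crossedProduct hΩ).hstar i j k ≠ 0 →
      (B.crossedProduct hΩ).simLeft i ((B.crossedProduct hΩ).einv j) ∧
        (B.crossedProduct hΩ).simLeft j ((B.crossedProduct hΩ).einv k) ∧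
        (B.crossedProduct hΩ).simLeft k ((B.crossedProduct hΩ).einv i) := by
  rintro ⟨w, x⟩ ⟨w', x'⟩ ⟨j, z⟩ hne
  rw [hstar_crossedProduct] at hne
  split_ifs at hne with h
  · obtain rfl := eq_inv_of_mul_eq_one_right h
    obtain ⟨h₁, h₂, h₃⟩ := hB.q6 _ _ _ hne
    rw [← hΩ.smul_einv] at h₁ h₂
    simp only [crossedProduct_einv, simLeft_crossedProduct_iff, inv_inv, smul_inv_smul,
      inv_smul_smul]
    refine ⟨(hΩ.simLeft_smul_iff x).1 (by rwa [smul_inv_smul]),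
      (hΩ.simLeft_smul_iff (x * x')).1 (by rwa [smul_smul, mul_inv_cancel_right]), h₃⟩
  · exact absurd rfl hne

theorem Excellent.crossedProduct_q8 (hB : B.Excellent) :
    ∀ i' i, (B.crossedProduct hΩ).leTwo i' i →
      (B.crossedProduct hΩ).af i' = (B.crossedProduct hΩ).af i →
        (B.crossedProduct hΩ).simTwo i' i := by
  rintro ⟨j, z⟩ ⟨i, x⟩ hle haf
  obtain ⟨y, hy⟩ := (leTwo_crossedProduct_iff _ _ _ _).1 hle
  rw [af_crossedProduct, af_crossedProduct, ← hΩ.af_smul y] at haf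
  refine ⟨hle, (leTwo_crossedProduct_iff _ _ _ _).2 ⟨y⁻¹, ?_⟩⟩
  simpa using hΩ.leTwo_smul y⁻¹ (hB.q8 _ _ hy haf).2

theorem Excellent.crossedProduct_q11 (hB : B.Excellent) :
    ∀ i i' j k, (B.crossedProduct hΩ).af j = (B.crossedProduct hΩ).af k → ∀ p q : ℤ,
      ∑ j', lcoeff ((B.crossedProduct hΩ).h k i' j') p *
          lcoeff ((B.crossedProduct hΩ).h i j' j) q
        = ∑ j', lcoeff ((B.crossedProduct hΩ).h i k j') q *
          lcoeff ((B.crossedProduct hΩ).h j' i' j) p := by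
  rintro ⟨i, x⟩ ⟨i', x'⟩ ⟨j, z⟩ ⟨k, u⟩ haf p q
  rw [af_crossedProduct, af_crossedProduct, ← hΩ.af_smul x k] at haf
  simp only [crossedProduct_h]
  rw [sum_crossH_crossH_right hΩ (fun X Y => lcoeff X p * lcoeff Y q) (by simp [lcoeff_zero])
      (by simp [lcoeff_zero]),
    sum_crossH_crossH_left (fun X Y => lcoeff X q * lcoeff Y p) (by simp [lcoeff_zero])
      (by simp [lcoeff_zero])]
  split_ifs
  · exact hB.q11 i ((x * u) • i') j (x • k) haf p q
  · rfl

end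

theorem Excellent.crossedProduct (hB : B.Excellent) (hΩ : B.IsCompatibleAction Ω) :
    (B.crossedProduct hΩ).Excellent where
  q1 := hB.crossedProduct_q1
  q2 := by
    rintro ⟨w, x⟩
    rw [existsUnique_mem_I0_crossedProduct]
    simpa [hstar_einv_crossedProduct] using hB.q2 (x⁻¹ • w)
  q3 := by
    rintro ⟨j, z⟩ ⟨i, x⟩ hle
    obtain ⟨y, hy⟩ := (leTwo_crossedProduct_iff _ _ _ _).1 hle
    rw [af_crossedProduct, af_crossedProduct, ← hΩ.af_smul y j]
    exact hB.q3 _ _ hy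
  q4 := by
    rintro ⟨j, z⟩ hj ⟨w, x⟩
    obtain ⟨hj, rfl⟩ := (mem_I0_crossedProduct _).1 hj
    simpa [hstar_einv_crossedProduct] using hB.q4 j hj _
  q5 := hB.crossedProduct_q5
  q6 := hB.crossedProduct_q6
  q7 := by
    rintro ⟨j, z⟩ ⟨i, x⟩ hle haf
    rw [af_crossedProduct, af_crossedProduct] at haf
    rw [leLeft_crossedProduct_iff] at hle
    rw [simLeft_crossedProduct_iff]
    exact hB.q7 _ _ hle (by rw [hΩ.af_smul, hΩ.af_smul, haf])
  q8 := hB.crossedProduct_q8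
  q9a := by
    rintro ⟨i, x⟩
    rw [existsUnique_mem_I0_crossedProduct]
    simpa [simLeft_crossedProduct_iff] using hB.q9a (x⁻¹ • i)
  q9b := by
    rintro ⟨i, x⟩ ⟨j, z⟩ hj hsim
    obtain ⟨hj, rfl⟩ := (mem_I0_crossedProduct _).1 hj
    rw [simLeft_crossedProduct_iff, inv_one, one_smul] at hsim
    simpa [hstar_einv_crossedProduct] using hB.q9b _ j hj hsim
  q10 := by
    rintro ⟨i, x⟩
    rw [crossedProduct_einv]
    exact ⟨(leTwo_crossedProduct_iff _ _ _ _).2 ⟨x⁻¹, hΩ.leTwo_smul x⁻¹ (hB.q10 i).1⟩,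
      (leTwo_crossedProduct_iff _ _ _ _).2 ⟨x, by simpa using (hB.q10 i).2⟩⟩
  q11 := hB.crossedProduct_q11

end CrossedProduct

end BasedAlgebra

theorem statement10_general {I' Om : Type} [Fintype I'] [DecidableEq I']
    [Fintype Om] [DecidableEq Om] [Group Om] [MulAction Om I']
    (B : BasedAlgebra I') (hB : B.Excellent)
    (hact_h : ∀ (x : Om) (w w' w'' : I'), B.h (x • w) (x • w') (x • w'') = B.h w w' w'')
    (hact_inv : ∀ (x : Om) (w : I'), x • B.einv w = B.einv (x • w)) :
    ∃ E : BasedAlgebra (I' × Om),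
      (∀ (w w' w'' : I') (x x' x'' : Om),
        E.h (w, x) (w', x') (w'', x'') =
          if x'' = x * x' then B.h w (x • w') w'' else 0) ∧
      (∀ (w : I') (x : Om), E.einv (w, x) = (x⁻¹ • B.einv w, x⁻¹)) ∧
      (∀ p : I' × Om, p ∈ E.I0 ↔ p.1 ∈ B.I0 ∧ p.2 = 1) ∧
      (∀ (w : I') (x : Om), E.e (w, x) = if x = 1 then B.e w else 0) ∧
      E.Excellent :=
  have hΩ : B.IsCompatibleAction Om := ⟨hact_h, hact_inv⟩
  ⟨B.crossedProduct hΩ, fun _ _ _ _ _ _ => rfl, fun _ _ => rfl,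
    BasedAlgebra.mem_I0_crossedProduct, fun _ _ => rfl, hB.crossedProduct hΩ⟩

/-- Lusztig 1.11(ii). Let `𝔄₀` be an excellent based `A`-algebra with
index set `I'` and let `Ω` be a finite group acting on `I'` compatibly with the structure
constants, the involution and the distinguished subset. Then the crossed product
`𝔄₀⋊Ω`, with basis `{c_w ⊗ x}`, product `(c_w ⊗ x)(c_{w'} ⊗ x') = (c_w c_{x(w')}) ⊗ xx'`,
involution `(w,x)^! = (x⁻¹(w^!), x⁻¹)` and distinguished subset `{(d,1) : d ∈ I₀'}`, is an
excellent based `A`-algebra. -/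
theorem statement10 {I' Om : Type} [Fintype I'] [DecidableEq I']
    [Fintype Om] [DecidableEq Om] [Group Om] [MulAction Om I']
    (B : BasedAlgebra I') (hB : B.Excellent)
    (hact_h : ∀ (x : Om) (w w' w'' : I'), B.h (x • w) (x • w') (x • w'') = B.h w w' w'')
    (hact_inv : ∀ (x : Om) (w : I'), x • B.einv w = B.einv (x • w))
    (hact_I0 : ∀ (x : Om) (w : I'), w ∈ B.I0 ↔ x • w ∈ B.I0) :
    ∃ E : BasedAlgebra (I' × Om),
      (∀ (w w' w'' : I') (x x' x'' : Om),
        E.h (w, x) (w', x') (w'', x'') =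
          if x'' = x * x' then B.h w (x • w') w'' else 0) ∧
      (∀ (w : I') (x : Om), E.einv (w, x) = (x⁻¹ • B.einv w, x⁻¹)) ∧
      (∀ p : I' × Om, p ∈ E.I0 ↔ p.1 ∈ B.I0 ∧ p.2 = 1) ∧
      (∀ (w : I') (x : Om), E.e (w, x) = if x = 1 then B.e w else 0) ∧
      E.Excellent :=
  statement10_general B hB hact_h hact_inv
end
end

section
/- Let 𝔄 be an excellent based A-algebra, let k be an algebraically closed field of characteristic 0, and let J = k ⊗_ℤ 𝔄^∞. Let Γ be a left cell of I and let [Γ] denote the k-span of {t_i : i ∈ Γ} in J. Then [Γ] is a left ideal of J. Moreover, if d is the unique element of Γ ∩ I₀, then for every finite-dimensional simple J-module M the k-linear map Hom_J([Γ], M) → t_d M, ξ ↦ ξ(t_d), is an isomorphism; consequently the trace of t_d on M equals dim_k Hom_J([Γ], M), the multiplicity of M in the J-module [Γ]. -/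
open scoped Classical
open Finset

noncomputable section

/-- Scalar action by `a : J` on a `J`-module `M`, as a `k`-linear endomorphism of `M`. -/
def smulEnd (k J M : Type) [CommSemiring k] [Ring J] [Algebra k J] [AddCommGroup M]
    [Module J M] [Module k M] [IsScalarTower k J M] (a : J) : M →ₗ[k] M where
  toFun m := a • m
  map_add' := smul_add a
  map_smul' c m := by
    simp only [RingHom.id_apply]
    rw [← algebraMap_smul J c m, ← mul_smul, ← Algebra.commutes c a, mul_smul,
      algebraMap_smul]

/-! Let `d ∈ Γ ∩ I₀`. By Q1, Q5 and Q9 the structure constants give `t_i t_d = t_i` for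
`i ∈ Γ`, and by Q6 every `t_a t_i` with `i ∈ Γ` is a combination of `t_j` with `j ∈ Γ`; so
`[Γ]` is a left ideal of `J` on which the idempotent `e = t_d` is a right unit. For such an
ideal every `J`-linear `ξ : [Γ] → M` satisfies `ξ(x) = ξ(x e) = x ξ(e)`, so `ξ` is determined by
`ξ(e) = e ξ(e) ∈ e M`, and every `m ∈ e M` arises from `x ↦ x m`. Finally the trace of an
idempotent endomorphism is the dimension of its image `e M`. -/

namespace Submodule

variable {k J : Type} [CommSemiring k] [Semiring J] [Algebra k J] {S T : Set J}

theorem mul_mem_span_of_mul_mem (hT : span k T = ⊤)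
    (hTS : ∀ a ∈ T, ∀ s ∈ S, a * s ∈ span k S) (a : J) {x : J} (hx : x ∈ span k S) :
    a * x ∈ span k S := by
  have hS : ∀ s ∈ S, a * s ∈ span k S := fun s hs => by
    have : span k T ≤ (span k S).comap (LinearMap.mulRight k s) :=
      span_le.mpr fun b hb => hTS b hb s hs
    exact this (hT ▸ mem_top)
  exact (span_le (p := (span k S).comap (LinearMap.mulLeft k a)) |>.mpr hS) hx

theorem coe_span_eq_span_of_mul_mem (hT : span k T = ⊤)
    (hTS : ∀ a ∈ T, ∀ s ∈ S, a * s ∈ span k S) :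
    (span J S : Set J) = span k S := by
  refine Set.Subset.antisymm (fun x hx => ?_) (span_le_restrictScalars k J S)
  exact span_induction subset_span (zero_mem _) (fun _ _ _ _ => add_mem)
    (fun a _ _ hm => mul_mem_span_of_mul_mem hT hTS a hm) hx

end Submodule

section RightUnit

variable {J M : Type} [Semiring J] [AddCommMonoid M] [Module J M] {S : Set J} {e : J}

theorem eq_toSpanSingleton_comp_subtype (he : e ∈ S) (hSe : ∀ s ∈ S, s * e = s)
    (f : Submodule.span J S →ₗ[J] M) :
    f = LinearMap.toSpanSingleton J M (f ⟨e, Submodule.subset_span he⟩) ∘ₗ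
      (Submodule.span J S).subtype := by
  refine LinearMap.ext_on Submodule.span_span_coe_preimage ?_
  rintro ⟨s, hs⟩ hsS
  have : (⟨s, hs⟩ : Submodule.span J S) = s • ⟨e, Submodule.subset_span he⟩ :=
    Subtype.ext (hSe s hsS).symm
  rw [LinearMap.comp_apply, this, map_smul]
  simp [hSe s hsS]


theorem injective_eval_of_mul_right_eq (he : e ∈ S) (hSe : ∀ s ∈ S, s * e = s) :
    Function.Injective fun f : Submodule.span J S →ₗ[J] M => f ⟨e, Submodule.subset_span he⟩ :=
  fun f g hfg => by
    rw [eq_toSpanSingleton_comp_subtype he hSe f, eq_toSpanSingleton_comp_subtype he hSe g]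
    exact congrArg (fun m => LinearMap.toSpanSingleton J M m ∘ₗ _) hfg

theorem range_eval_of_mul_right_eq (he : e ∈ S) (hSe : ∀ s ∈ S, s * e = s) :
    Set.range (fun f : Submodule.span J S →ₗ[J] M => f ⟨e, Submodule.subset_span he⟩) =
      Set.range (fun m : M => e • m) := by
  refine Set.Subset.antisymm ?_ ?_
  · rintro _ ⟨f, rfl⟩
    refine ⟨f ⟨e, Submodule.subset_span he⟩, ?_⟩
    conv_rhs => rw [eq_toSpanSingleton_comp_subtype he hSe f]
    rfl
  · rintro _ ⟨m, rfl⟩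
    exact ⟨LinearMap.toSpanSingleton J M m ∘ₗ (Submodule.span J S).subtype, rfl⟩

end RightUnit

section Trace

variable {k J M : Type} [Field k] [Ring J] [Algebra k J] [AddCommGroup M] [Module J M]
  [Module k M] [IsScalarTower k J M] {S : Set J} {e : J}

theorem isIdempotentElem_smulEnd (he : IsIdempotentElem e) :
    IsIdempotentElem (smulEnd k J M e) :=
  LinearMap.ext fun m => by
    change e • e • m = e • m
    rw [← mul_smul, he.eq]

theorem trace_smulEnd_eq_finrank_hom [SMulCommClass J k M] [FiniteDimensional k M]
    (he : e ∈ S) (hSe : ∀ s ∈ S, s * e = s) :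
    LinearMap.trace k M (smulEnd k J M e) =
      (Module.finrank k (Submodule.span J S →ₗ[J] M) : k) := by
  set eval : (Submodule.span J S →ₗ[J] M) →ₗ[k] M :=
    LinearMap.applyₗ' k ⟨e, Submodule.subset_span he⟩
  have heval : Function.Injective eval := injective_eval_of_mul_right_eq he hSe
  have hrange : LinearMap.range (smulEnd k J M e) = LinearMap.range eval :=
    SetLike.coe_injective <| by
      rw [LinearMap.coe_range, LinearMap.coe_range]
      exact (range_eval_of_mul_right_eq he hSe).symm
  have : FiniteDimensional k (Submodule.span J S →ₗ[J] M) :=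
    FiniteDimensional.of_injective eval heval
  have hproj := LinearMap.IsIdempotentElem.isProj_range _
    (isIdempotentElem_smulEnd (k := k) (M := M) (hSe e he))
  rw [hproj.trace, hrange, LinearMap.finrank_range_of_inj heval]

end Trace

namespace BasedAlgebra

variable {I : Type} [Fintype I] [DecidableEq I] {B : BasedAlgebra I} {c : Set I} {i j : I}

theorem simLeft_symm (h : B.simLeft i j) : B.simLeft j i :=
  ⟨h.2, h.1⟩

theorem simLeft_trans {l : I} (h₁ : B.simLeft i j) (h₂ : B.simLeft j l) : B.simLeft i l :=
  ⟨h₁.1.trans h₂.1, h₂.2.trans h₁.2⟩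

theorem IsLeftCell.simLeft_of_mem (hc : B.IsLeftCell c) (hi : i ∈ c) (hj : j ∈ c) :
    B.simLeft i j := by
  obtain ⟨i₀, rfl⟩ := hc
  exact simLeft_trans hi (simLeft_symm hj)

theorem IsLeftCell.mem_of_simLeft (hc : B.IsLeftCell c) (hi : i ∈ c) (hji : B.simLeft j i) :
    j ∈ c := by
  obtain ⟨i₀, rfl⟩ := hc
  exact simLeft_trans hji hi

theorem Excellent.hstar_einv_of_mem_I0 (hB : B.Excellent) {d : I} (hd0 : d ∈ B.I0)
    (hdi : B.simLeft d i) (j : I) :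
    B.hstar i d (B.einv j) = if j = i then 1 else 0 := by
  split_ifs with hji
  · subst hji
    rw [hB.q5, hB.q5]
    exact hB.q9b j d hd0 hdi
  · by_contra hne
    rw [hB.q5, hB.q5] at hne
    have hij := hB.q1 d hd0 (B.einv j) i hne
    exact hji (B.einv_invol j ▸ hij).symm

theorem Excellent.simLeft_of_hstar_ne_zero (hB : B.Excellent) {a : I}
    (h : B.hstar a i (B.einv j) ≠ 0) : B.simLeft j i := by
  have hij := (hB.q6 a i (B.einv j) h).2.1
  exact simLeft_symm (B.einv_invol j ▸ hij)

section Realization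

variable {k J : Type} [Field k] [Ring J] [Algebra k J] {t : I → J}

theorem Excellent.mul_eq_self_of_simLeft (hB : B.Excellent)
    (hmul : ∀ i i', t i * t i' = ∑ j, ((B.hstar i i' (B.einv j) : ℤ) : k) • t j)
    {d : I} (hd0 : d ∈ B.I0) (hdi : B.simLeft d i) : t i * t d = t i := by
  simp [hmul, hB.hstar_einv_of_mem_I0 hd0 hdi]

theorem Excellent.mul_mem_span_of_isLeftCell (hB : B.Excellent)
    (hmul : ∀ i i', t i * t i' = ∑ j, ((B.hstar i i' (B.einv j) : ℤ) : k) • t j)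
    (hc : B.IsLeftCell c) (a : I) (hi : i ∈ c) : t a * t i ∈ Submodule.span k (t '' c) := by
  rw [hmul]
  refine Submodule.sum_mem _ fun j _ => ?_
  by_cases hz : B.hstar a i (B.einv j) = 0
  · simp [hz]
  · exact Submodule.smul_mem _ _ <| Submodule.subset_span
      ⟨j, hc.mem_of_simLeft hi (hB.simLeft_of_hstar_ne_zero hz), rfl⟩

end Realization

end BasedAlgebra

theorem statement12_general {I : Type} [Fintype I] [DecidableEq I]
    (B : BasedAlgebra I) (hB : B.Excellent)
    {k : Type} [Field k]
    {J : Type} [Ring J] [Algebra k J] (t : I → J)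
    (hsp : Submodule.span k (Set.range t) = ⊤)
    (hmul : ∀ i i', t i * t i' = ∑ j, ((B.hstar i i' (B.einv j) : ℤ) : k) • t j)
    (c : Set I) (hc : B.IsLeftCell c)
    (d : I) (hd0 : d ∈ B.I0) (hdc : d ∈ c)
    {M : Type} [AddCommGroup M] [Module J M] [Module k M] [IsScalarTower k J M]
    [SMulCommClass J k M]
    [FiniteDimensional k M] :
    ((Submodule.span J (t '' c) : Set J) = (Submodule.span k (t '' c) : Set J)) ∧
    Function.Injective (fun f : (Submodule.span J (t '' c)) →ₗ[J] M =>
      f ⟨t d, Submodule.subset_span ⟨d, hdc, rfl⟩⟩) ∧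
    (Set.range (fun f : (Submodule.span J (t '' c)) →ₗ[J] M =>
      f ⟨t d, Submodule.subset_span ⟨d, hdc, rfl⟩⟩) = Set.range (fun m : M => t d • m)) ∧
    LinearMap.trace k M (smulEnd k J M (t d)) =
      (Module.finrank k ((Submodule.span J (t '' c)) →ₗ[J] M) : k) := by
  have hdS : t d ∈ t '' c := ⟨d, hdc, rfl⟩
  have hright : ∀ s ∈ t '' c, s * t d = s := by
    rintro _ ⟨i, hi, rfl⟩
    exact hB.mul_eq_self_of_simLeft hmul hd0 (hc.simLeft_of_mem hdc hi)
  have hideal : ∀ a ∈ Set.range t, ∀ s ∈ t '' c, a * s ∈ Submodule.span k (t '' c) := by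
    rintro _ ⟨a, rfl⟩ _ ⟨i, hi, rfl⟩
    exact hB.mul_mem_span_of_isLeftCell hmul hc a hi
  exact ⟨Submodule.coe_span_eq_span_of_mul_mem hsp hideal,
    injective_eval_of_mul_right_eq hdS hright, range_eval_of_mul_right_eq hdS hright,
    trace_smulEnd_eq_finrank_hom hdS hright⟩

/-- Lusztig 1.12(a). Let `𝔄` be an excellent based `A`-algebra, `k` an
algebraically closed field of characteristic `0`, and `J = k ⊗_ℤ 𝔄^∞` (realized as a
`k`-algebra `J` with basis `t : I → J` satisfying the multiplication rule of `𝔄^∞`).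
Let `Γ` be a left cell and `[Γ]` the `k`-span of `{t_i : i ∈ Γ}`. Then `[Γ]` is a left
ideal of `J`; and if `d` is the unique element of `Γ ∩ I₀`, then for every
finite-dimensional simple `J`-module `M` the map `ξ ↦ ξ(t_d)` from `Hom_J([Γ], M)` to
`t_d M` is an isomorphism; consequently the trace of `t_d` on `M` equals
`dim_k Hom_J([Γ], M)`, the multiplicity of `M` in `[Γ]`. -/
theorem statement12 {I : Type} [Fintype I] [DecidableEq I]
    (B : BasedAlgebra I) (hB : B.Excellent)
    {k : Type} [Field k] [IsAlgClosed k] [CharZero k]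
    {J : Type} [Ring J] [Algebra k J] (t : I → J)
    (hli : LinearIndependent k t)
    (hsp : Submodule.span k (Set.range t) = ⊤)
    (hmul : ∀ i i', t i * t i' = ∑ j, ((B.hstar i i' (B.einv j) : ℤ) : k) • t j)
    (hone : (1 : J) = ∑ i ∈ B.I0, t i)
    (c : Set I) (hc : B.IsLeftCell c)
    (d : I) (hd0 : d ∈ B.I0) (hdc : d ∈ c)
    (hduniq : ∀ d' ∈ B.I0, d' ∈ c → d' = d)
    {M : Type} [AddCommGroup M] [Module J M] [Module k M] [IsScalarTower k J M]
    [SMulCommClass k J M] [SMulCommClass J k M]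
    [FiniteDimensional k M] [IsSimpleModule J M] :
    ((Submodule.span J (t '' c) : Set J) = (Submodule.span k (t '' c) : Set J)) ∧
    Function.Injective (fun f : (Submodule.span J (t '' c)) →ₗ[J] M =>
      f ⟨t d, Submodule.subset_span ⟨d, hdc, rfl⟩⟩) ∧
    (Set.range (fun f : (Submodule.span J (t '' c)) →ₗ[J] M =>
      f ⟨t d, Submodule.subset_span ⟨d, hdc, rfl⟩⟩) = Set.range (fun m : M => t d • m)) ∧
    LinearMap.trace k M (smulEnd k J M (t d)) =
      (Module.finrank k ((Submodule.span J (t '' c)) →ₗ[J] M) : k) :=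
  statement12_general B hB t hsp hmul c hc d hd0 hdc
end
end
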